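/- (Functoriality of F_Η^(k)) Let F be an r-sort species admitting a composition operator Η. For each morphism f : Ω → Ω̃ in Set^r and every integer k ≥ 0, one has F[f](F_Η^(k)[Ω]) = F_Η^(k)[Ω̃]; hence each F_Η^(k) is a functor from Set^r to Set, i.e., an r-sort species. -/

import Mathlib

open scoped Classical

noncomputable section

/-- Objects of `Set^r`: `r`-tuples of finite sets (realized as finite subsets of `ℕ`). -/
abbrev Obj (r : ℕ) := Fin r → Finset ℕ

variable {r : ℕ}

/-- The `r`-tuple of empty sets. -/
def oEmpty (r : ℕ) : Obj r := fun _ => ∅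

/-- Componentwise union (the disjoint union `⨿` when the arguments are
componentwise disjoint). -/
def oUnion (Ω₁ Ω₂ : Obj r) : Obj r := fun i => Ω₁ i ∪ Ω₂ i

/-- Componentwise intersection. -/
def oInter (Ω₁ Ω₂ : Obj r) : Obj r := fun i => Ω₁ i ∩ Ω₂ i

/-- Componentwise set difference. -/
def oDiff (Ω₁ Ω₂ : Obj r) : Obj r := fun i => Ω₁ i \ Ω₂ i

/-- Componentwise disjointness. -/
def oDisj (Ω₁ Ω₂ : Obj r) : Prop := ∀ i, Disjoint (Ω₁ i) (Ω₂ i)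

/-- Componentwise containment. -/
def oSub (Ω₁ Ω₂ : Obj r) : Prop := ∀ i, Ω₁ i ⊆ Ω₂ i

/-- A morphism of `Set^r`: an `r`-tuple of bijections between the components. -/
def Mor (Ω₁ Ω₂ : Obj r) : Type := ∀ i, {x // x ∈ Ω₁ i} ≃ {x // x ∈ Ω₂ i}

/-- The identity morphism. -/
def idMor (Ω : Obj r) : Mor Ω Ω := fun _ => Equiv.refl _

/-- Composition of morphisms. -/
def compMor {Ω₁ Ω₂ Ω₃ : Obj r} (f : Mor Ω₁ Ω₂) (g : Mor Ω₂ Ω₃) : Mor Ω₁ Ω₃ :=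
  fun i => (f i).trans (g i)

/-- An `r`-sort species: a (covariant) functor from `Set^r` to the category of
finite sets and bijections.  The value `F[Ω]` is the finite set `obj Ω`, and the
action on a morphism `f` is encoded by the function `map f : ℕ → ℕ` (only its
values on `obj Ω₁` are relevant). -/
structure Species (r : ℕ) where
  obj : Obj r → Finset ℕ
  map : ∀ {Ω₁ Ω₂ : Obj r}, Mor Ω₁ Ω₂ → ℕ → ℕ
  map_mem : ∀ {Ω₁ Ω₂ : Obj r} (f : Mor Ω₁ Ω₂), ∀ x ∈ obj Ω₁, map f x ∈ obj Ω₂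
  map_id : ∀ (Ω : Obj r), ∀ x ∈ obj Ω, map (idMor Ω) x = x
  map_comp : ∀ {Ω₁ Ω₂ Ω₃ : Obj r} (f : Mor Ω₁ Ω₂) (g : Mor Ω₂ Ω₃), ∀ x ∈ obj Ω₁,
    map (compMor f g) x = map g (map f x)

/-- The canonical identification of a disjoint union `s ∪ t` with the sum `s ⊕ t`. -/
def finsetSumEquiv {s t : Finset ℕ} (h : Disjoint s t) :
    {x // x ∈ s ∪ t} ≃ {x // x ∈ s} ⊕ {x // x ∈ t} :=
  (Equiv.subtypeEquivRight (fun x => by simp)).trans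
    (Equiv.Set.union (s := (↑s : Set ℕ)) (t := (↑t : Set ℕ)) (by exact_mod_cast h))

/-- The disjoint union of two bijections, as a bijection between unions. -/
def finsetUnionEquiv {s t s' t' : Finset ℕ} (h : Disjoint s t) (h' : Disjoint s' t')
    (f : {x // x ∈ s} ≃ {x // x ∈ s'}) (g : {x // x ∈ t} ≃ {x // x ∈ t'}) :
    {x // x ∈ s ∪ t} ≃ {x // x ∈ s' ∪ t'} :=
  (finsetSumEquiv h).trans ((f.sumCongr g).trans (finsetSumEquiv h').symm)

/-- The disjoint union `f ⨿ g` of two morphisms of `Set^r`. -/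
def morUnion {Ω₁ Ω₂ Ω₁' Ω₂' : Obj r} (h : oDisj Ω₁ Ω₂) (h' : oDisj Ω₁' Ω₂')
    (f : Mor Ω₁ Ω₁') (g : Mor Ω₂ Ω₂') : Mor (oUnion Ω₁ Ω₂) (oUnion Ω₁' Ω₂') :=
  fun i => finsetUnionEquiv (h i) (h' i) (f i) (g i)

/-- A composition operator `Η` for the species `F`: a natural transformation from
`F × F` (on pairs of componentwise disjoint objects) to `F ∘ ⨿` with injective
components, satisfying Axiom (D1). -/
structure CompOp {r : ℕ} (F : Species r) where
  η : Obj r → Obj r → ℕ × ℕ → ℕ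
  mem_η : ∀ {Ω₁ Ω₂ : Obj r}, oDisj Ω₁ Ω₂ → ∀ x ∈ F.obj Ω₁, ∀ y ∈ F.obj Ω₂,
    η Ω₁ Ω₂ (x, y) ∈ F.obj (oUnion Ω₁ Ω₂)
  inj_η : ∀ {Ω₁ Ω₂ : Obj r}, oDisj Ω₁ Ω₂ →
    Set.InjOn (η Ω₁ Ω₂) ((F.obj Ω₁ : Set ℕ) ×ˢ (F.obj Ω₂ : Set ℕ))
  natural : ∀ {Ω₁ Ω₂ Ω₁' Ω₂' : Obj r} (h : oDisj Ω₁ Ω₂) (h' : oDisj Ω₁' Ω₂')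
    (f : Mor Ω₁ Ω₁') (g : Mor Ω₂ Ω₂'), ∀ x ∈ F.obj Ω₁, ∀ y ∈ F.obj Ω₂,
    F.map (morUnion h h' f g) (η Ω₁ Ω₂ (x, y)) = η Ω₁' Ω₂' (F.map f x, F.map g y)
  D1 : ∀ {Ω₁ Ω₂ Ω₃ Ω₄ : Obj r}, oDisj Ω₁ Ω₂ → oDisj Ω₃ Ω₄ →
    oUnion Ω₁ Ω₂ = oUnion Ω₃ Ω₄ →
    η Ω₁ Ω₂ '' ((F.obj Ω₁ : Set ℕ) ×ˢ (F.obj Ω₂ : Set ℕ)) ∩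
      η Ω₃ Ω₄ '' ((F.obj Ω₃ : Set ℕ) ×ˢ (F.obj Ω₄ : Set ℕ)) =
    η Ω₁ Ω₂ ''
      ((η (oInter Ω₁ Ω₃) (oInter Ω₁ Ω₄) ''
          ((F.obj (oInter Ω₁ Ω₃) : Set ℕ) ×ˢ (F.obj (oInter Ω₁ Ω₄) : Set ℕ))) ×ˢ
        (η (oInter Ω₂ Ω₃) (oInter Ω₂ Ω₄) ''
          ((F.obj (oInter Ω₂ Ω₃) : Set ℕ) ×ˢ (F.obj (oInter Ω₂ Ω₄) : Set ℕ))))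

/-- The set `F_Η[Ω]` of indecomposable elements of `F[Ω]`. -/
def indec (F : Species r) (E : CompOp F) (Ω : Obj r) : Set ℕ :=
  if Ω = oEmpty r then ∅
  else (F.obj Ω : Set ℕ) \
    ⋃ (p : Obj r × Obj r) (_ : oDisj p.1 p.2) (_ : p.1 ≠ oEmpty r) (_ : p.2 ≠ oEmpty r)
      (_ : oUnion p.1 p.2 = Ω),
      E.η p.1 p.2 '' ((F.obj p.1 : Set ℕ) ×ˢ (F.obj p.2 : Set ℕ))

/-- The sets `F_Η^(k)[Ω]` of elements of `F[Ω]` consisting of exactly `k`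
indecomposable components. -/
def indecK (F : Species r) (E : CompOp F) : ℕ → Obj r → Set ℕ
  | 0 => fun Ω => if Ω = oEmpty r then (F.obj (oEmpty r) : Set ℕ) else ∅
  | (k + 1) => fun Ω => ⋃ (Ω₁ : Obj r) (_ : oSub Ω₁ Ω),
      E.η Ω₁ (oDiff Ω Ω₁) '' ((indec F E Ω₁) ×ˢ (indecK F E k (oDiff Ω Ω₁)))

/-- `Ω_I`: the componentwise disjoint union of the family `Ωs` over the index set `s`. -/
def bigU {ι : Type} [DecidableEq ι] (Ωs : ι → Obj r) (s : Finset ι) : Obj r :=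
  fun i => s.biUnion (fun j => Ωs j i)

/-- `Brack F E Ωs leaf s B` says that `B` is an `Η`-bracketing of the sets
`leaf (Ωs i)`, `i ∈ s` (each occurring exactly once).  For `leaf Ω = F[Ω]` this is an
`Η`-bracketing of the `F[Ωs i]`; for `leaf = indec F E` it is an `Η`-bracketing of
the `F_Η[Ωs i]`. -/
inductive Brack (F : Species r) (E : CompOp F) {ι : Type} [DecidableEq ι]
    (Ωs : ι → Obj r) (leaf : Obj r → Set ℕ) : Finset ι → Set ℕ → Prop
  | single (i : ι) : Brack F E Ωs leaf {i} (leaf (Ωs i))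
  | node {s t : Finset ι} {B₁ B₂ : Set ℕ} :
      Disjoint s t → s.Nonempty → t.Nonempty →
      Brack F E Ωs leaf s B₁ → Brack F E Ωs leaf t B₂ →
      Brack F E Ωs leaf (s ∪ t) (E.η (bigU Ωs s) (bigU Ωs t) '' (B₁ ×ˢ B₂))

/-- A `Λ`-weight on `(F, Η)`: Axioms (W0), (W1), (W2). -/
structure Weight {r : ℕ} (F : Species r) (E : CompOp F) (Λ : Type) [CommRing Λ]
    [Algebra ℚ Λ] where
  w : Obj r → ℕ → Λ
  W0 : ∀ x ∈ F.obj (oEmpty r), w (oEmpty r) x = 1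
  W1 : ∀ {Ω Ω' : Obj r} (f : Mor Ω Ω'), ∀ x ∈ F.obj Ω, w Ω' (F.map f x) = w Ω x
  W2 : ∀ {Ω₁ Ω₂ : Obj r}, oDisj Ω₁ Ω₂ → ∀ x ∈ indec F E Ω₁, ∀ y ∈ F.obj Ω₂,
    w (oUnion Ω₁ Ω₂) (E.η Ω₁ Ω₂ (x, y)) = w Ω₁ x * w Ω₂ y

/-- The standard object `([n₁], …, [n_r])`, with `[n] = {1, …, n}`. -/
def stdObj {r : ℕ} (n : Fin r → ℕ) : Obj r := fun i => Finset.Icc 1 (n i)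

/-- The exponential generating function
`Σ_{n₁,…,n_r ≥ 0} Σ_{x ∈ S[([n₁],…,[n_r])]} w(x) z₁^{n₁} ⋯ z_r^{n_r}/(n₁! ⋯ n_r!)`
of a subfamily `S` of a species `F`, with respect to a weight `w`. -/
def GF {r : ℕ} {Λ : Type} [CommRing Λ] [Algebra ℚ Λ] (F : Species r)
    (S : Obj r → Set ℕ) (w : Obj r → ℕ → Λ) : MvPowerSeries (Fin r) Λ :=
  fun d => (algebraMap ℚ Λ (∏ i, (1 / (Nat.factorial (d i)) : ℚ))) *
    ∑ x ∈ (F.obj (stdObj fun i => d i)).filter (fun x => x ∈ S (stdObj fun i => d i)),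
      w (stdObj fun i => d i) x

/-- The exponential `exp f = Σ_{k ≥ 0} f^k / k!` of a multivariate formal power
series `f` with zero constant term (the coefficient of a given monomial only
receives contributions from `k` at most the total degree). -/
def mvExp {σ Λ : Type} [CommRing Λ] [Algebra ℚ Λ] (f : MvPowerSeries σ Λ) :
    MvPowerSeries σ Λ :=
  fun d => ∑ k ∈ Finset.range ((d.sum fun _ m => m) + 1),
    algebraMap ℚ Λ ((1 : ℚ) / (Nat.factorial k)) * MvPowerSeries.coeff d (f ^ k)

/-- The logarithm `log f = Σ_{k ≥ 1} (-1)^{k+1} (f-1)^k / k` of a multivariate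
formal power series `f` with constant term `1`. -/
def mvLog {σ Λ : Type} [CommRing Λ] [Algebra ℚ Λ] (f : MvPowerSeries σ Λ) :
    MvPowerSeries σ Λ :=
  fun d => ∑ k ∈ Finset.Icc 1 (d.sum fun _ m => m),
    algebraMap ℚ Λ ((-1 : ℚ) ^ (k + 1) / k) * MvPowerSeries.coeff d ((f - 1) ^ k)

/-- The refined generating function `G̃F_F(z₁,…,z_r,y)`, a power series in
`z₁, …, z_r` with coefficients that are polynomials in `y` (recorded via
`Polynomial Λ`, the variable `y` being `Polynomial.X`):
`Σ_{n₁,…,n_r ≥ 0} Σ_k Σ_{x ∈ F_Η^(k)[([n₁],…,[n_r])]} y^k w(x) z₁^{n₁}⋯z_r^{n_r}/(n₁!⋯n_r!)`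
(for fixed `n₁, …, n_r` only the `k ≤ n₁ + ⋯ + n_r` contribute, since
`F_Η^(k)[Ω] = ∅ for k > ‖Ω‖`). -/
def tGF {r : ℕ} {Λ : Type} [CommRing Λ] [Algebra ℚ Λ] (F : Species r) (E : CompOp F)
    (w : Obj r → ℕ → Λ) : MvPowerSeries (Fin r) (Polynomial Λ) :=
  fun d => Polynomial.C (algebraMap ℚ Λ (∏ i, (1 / (Nat.factorial (d i)) : ℚ))) *
    ∑ k ∈ Finset.range ((∑ i, d i) + 1), Polynomial.X ^ k *
      Polynomial.C (∑ x ∈ (F.obj (stdObj fun i => d i)).filter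
          (fun x => x ∈ indecK F E k (stdObj fun i => d i)),
        w (stdObj fun i => d i) x)

/-- The species `E(F_Η)` of sets of `F_Η`-structures:  `E(F_Η)[Ω]` consists of all
finite sets `{(x₁,Ω₁),…,(x_k,Ω_k)}` with `x_i ∈ F_Η[Ω_i]`, the `Ω_i` nonempty and
pairwise componentwise disjoint, and `Ω₁ ⨿ ⋯ ⨿ Ω_k = Ω`. -/
def ESet {r : ℕ} (F : Species r) (E : CompOp F) (Ω : Obj r) :
    Set (Finset (ℕ × Obj r)) :=
  { s | (∀ p ∈ s, p.1 ∈ indec F E p.2 ∧ p.2 ≠ oEmpty r) ∧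
        (∀ p ∈ s, ∀ q ∈ s, p ≠ q → oDisj p.2 q.2) ∧
        (∀ i, Ω i = s.biUnion (fun p => p.2 i)) }

/-- The bijection between a finite set and its image under a map injective on it. -/
def imageEquiv {u : Finset ℕ} (g : ℕ → ℕ) (hg : Set.InjOn g (u : Set ℕ)) :
    {x // x ∈ u} ≃ {x // x ∈ u.image g} :=
  Equiv.ofBijective (fun x => ⟨g x, Finset.mem_image_of_mem g x.2⟩) (by
    constructor
    · rintro ⟨a, ha⟩ ⟨b, hb⟩ hab
      exact Subtype.ext (hg (by exact_mod_cast ha) (by exact_mod_cast hb)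
        (congrArg Subtype.val hab))
    · rintro ⟨y, hy⟩
      rcases Finset.mem_image.mp hy with ⟨a, ha, rfl⟩
      exact ⟨⟨a, ha⟩, rfl⟩)

/-- The underlying function `ℕ → ℕ` of the `i`-th component of a morphism. -/
def apMor {Ω Ω' : Obj r} (f : Mor Ω Ω') (i : Fin r) (a : ℕ) : ℕ :=
  if h : a ∈ Ω i then ((f i) ⟨a, h⟩ : ℕ) else a

/-- The componentwise image of a subobject `O ⊆ Ω` under a morphism `f : Ω → Ω'`. -/
def oImage {Ω Ω' : Obj r} (f : Mor Ω Ω') (O : Obj r) : Obj r :=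
  fun i => (O i).image (apMor f i)

/-- The restriction of a morphism `f : Ω → Ω'` to a subobject `O ⊆ Ω`. -/
def restrictMor {Ω Ω' : Obj r} (f : Mor Ω Ω') {O : Obj r} (hO : oSub O Ω) :
    Mor O (oImage f O) :=
  fun i => imageEquiv (apMor f i) (by
    intro a ha b hb hab
    have ha' : a ∈ Ω i := hO i (by exact_mod_cast ha)
    have hb' : b ∈ Ω i := hO i (by exact_mod_cast hb)
    have h1 : ((f i) ⟨a, ha'⟩ : ℕ) = ((f i) ⟨b, hb'⟩ : ℕ) := by
      simpa [apMor, dif_pos ha', dif_pos hb'] using hab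
    have h2 := (f i).injective (Subtype.ext h1)
    exact congrArg Subtype.val h2)

/-- The induced action of a morphism `f : Ω → Ω'` on `E(F_Η)[Ω]`. -/
def Emap {r : ℕ} (F : Species r) {Ω Ω' : Obj r} (f : Mor Ω Ω')
    (s : Finset (ℕ × Obj r)) : Finset (ℕ × Obj r) :=
  s.image (fun p =>
    if h : oSub p.2 Ω then (F.map (restrictMor f h) p.1, oImage f p.2) else p)

/-!
A morphism `f : Ω → Ω'` is the disjoint union of its restrictions to the pieces of any
decomposition `Ω = Ω₁ ⨿ Ω₂`, so by naturality of `η` the map `F[f]` sends `η(F[Ω₁] × F[Ω₂])`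
into `η(F[f Ω₁] × F[f Ω₂])`. Hence `F[f]` and its inverse `F[f⁻¹]` preserve decomposability,
so `F[f]` maps `F_Η[Ω]` into `F_Η[Ω']`, and by induction on `k` it maps `F_Η^(k)[Ω]` into
`F_Η^(k)[Ω']`. Applying this to `f⁻¹` as well gives equality.
-/

def Mor.symm {Ω Ω' : Obj r} (f : Mor Ω Ω') : Mor Ω' Ω := fun i => (f i).symm

namespace Species

lemma map_symm_map (F : Species r) {Ω Ω' : Obj r} (f : Mor Ω Ω') {x : ℕ}
    (hx : x ∈ F.obj Ω) : F.map f.symm (F.map f x) = x := by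
  have hid : compMor f f.symm = idMor Ω := funext fun i => (f i).self_trans_symm
  rw [← F.map_comp f f.symm x hx, hid, F.map_id Ω x hx]

lemma map_map_symm (F : Species r) {Ω Ω' : Obj r} (f : Mor Ω Ω') {y : ℕ}
    (hy : y ∈ F.obj Ω') : F.map f (F.map f.symm y) = y :=
  F.map_symm_map f.symm hy

lemma map_congr (F : Species r) {Ω₁ Ω₂ Ω₁' Ω₂' : Obj r} (f : Mor Ω₁ Ω₂) (g : Mor Ω₁' Ω₂')
    (h₁ : Ω₁ = Ω₁') (h₂ : Ω₂ = Ω₂') (hfg : ∀ i, ∀ a ∈ Ω₁ i, apMor f i a = apMor g i a) :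
    F.map f = F.map g := by
  subst h₁ h₂
  congr
  funext i
  ext a
  simpa [apMor] using hfg i a a.2

/-- Surjectivity comes for free: `F[f⁻¹]` is inverse to `F[f]`. -/
lemma image_eq_of_image_subset (F : Species r) {S : Obj r → Set ℕ}
    (hS : ∀ Ω, S Ω ⊆ F.obj Ω) (hmap : ∀ {Ω Ω' : Obj r} (f : Mor Ω Ω'), F.map f '' S Ω ⊆ S Ω')
    {Ω Ω' : Obj r} (f : Mor Ω Ω') : F.map f '' S Ω = S Ω' := by
  refine (hmap f).antisymm fun y hy => ?_
  exact ⟨F.map f.symm y, hmap f.symm ⟨y, hy, rfl⟩, F.map_map_symm f (hS Ω' hy)⟩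

end Species

lemma apMor_mem {Ω Ω' : Obj r} (f : Mor Ω Ω') {i : Fin r} {a : ℕ} (ha : a ∈ Ω i) :
    apMor f i a ∈ Ω' i := by
  rw [apMor, dif_pos ha]
  exact ((f i) ⟨a, ha⟩).2

lemma apMor_injOn {Ω Ω' : Obj r} (f : Mor Ω Ω') (i : Fin r) :
    Set.InjOn (apMor f i) (Ω i) := by
  intro a ha b hb hab
  simp only [apMor, dif_pos (show a ∈ Ω i from ha), dif_pos (show b ∈ Ω i from hb)] at hab
  exact congrArg Subtype.val ((f i).injective (Subtype.ext hab))

lemma apMor_restrictMor {Ω Ω' : Obj r} (f : Mor Ω Ω') {O : Obj r} (hO : oSub O Ω)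
    {i : Fin r} {a : ℕ} (ha : a ∈ O i) : apMor (restrictMor f hO) i a = apMor f i a := by
  rw [apMor, dif_pos ha]
  rfl

lemma finsetSumEquiv_apply_of_mem_left {s t : Finset ℕ} (h : Disjoint s t) {a : ℕ}
    (ha : a ∈ s ∪ t) (has : a ∈ s) : finsetSumEquiv h ⟨a, ha⟩ = Sum.inl ⟨a, has⟩ := by
  simp [finsetSumEquiv, Equiv.Set.union, Equiv.Set.union', has]

lemma finsetSumEquiv_apply_of_mem_right {s t : Finset ℕ} (h : Disjoint s t) {a : ℕ}
    (ha : a ∈ s ∪ t) (hat : a ∈ t) : finsetSumEquiv h ⟨a, ha⟩ = Sum.inr ⟨a, hat⟩ := by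
  simp [finsetSumEquiv, Equiv.Set.union, Equiv.Set.union', Finset.disjoint_right.mp h hat]

@[simp]
lemma finsetSumEquiv_symm_inl {s t : Finset ℕ} (h : Disjoint s t) (b : {x // x ∈ s}) :
    ((finsetSumEquiv h).symm (Sum.inl b) : ℕ) = b := by
  simp [finsetSumEquiv, Equiv.Set.union, Equiv.Set.union']

@[simp]
lemma finsetSumEquiv_symm_inr {s t : Finset ℕ} (h : Disjoint s t) (b : {x // x ∈ t}) :
    ((finsetSumEquiv h).symm (Sum.inr b) : ℕ) = b := by
  simp [finsetSumEquiv, Equiv.Set.union, Equiv.Set.union']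

lemma apMor_morUnion_of_mem_left {Ω₁ Ω₂ Ω₁' Ω₂' : Obj r} (h : oDisj Ω₁ Ω₂)
    (h' : oDisj Ω₁' Ω₂') (f : Mor Ω₁ Ω₁') (g : Mor Ω₂ Ω₂') {i : Fin r} {a : ℕ}
    (ha : a ∈ Ω₁ i) : apMor (morUnion h h' f g) i a = apMor f i a := by
  have ha' : a ∈ oUnion Ω₁ Ω₂ i := Finset.mem_union_left _ ha
  rw [apMor, apMor, dif_pos ha', dif_pos ha]
  change ((finsetSumEquiv (h' i)).symm (((f i).sumCongr (g i)) (finsetSumEquiv (h i) ⟨a, ha'⟩))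
    : ℕ) = _
  simp [finsetSumEquiv_apply_of_mem_left (h i) ha' ha]

lemma apMor_morUnion_of_mem_right {Ω₁ Ω₂ Ω₁' Ω₂' : Obj r} (h : oDisj Ω₁ Ω₂)
    (h' : oDisj Ω₁' Ω₂') (f : Mor Ω₁ Ω₁') (g : Mor Ω₂ Ω₂') {i : Fin r} {a : ℕ}
    (ha : a ∈ Ω₂ i) : apMor (morUnion h h' f g) i a = apMor g i a := by
  have ha' : a ∈ oUnion Ω₁ Ω₂ i := Finset.mem_union_right _ ha
  rw [apMor, apMor, dif_pos ha', dif_pos ha]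
  change ((finsetSumEquiv (h' i)).symm (((f i).sumCongr (g i)) (finsetSumEquiv (h i) ⟨a, ha'⟩))
    : ℕ) = _
  simp [finsetSumEquiv_apply_of_mem_right (h i) ha' ha]

lemma oImage_self {Ω Ω' : Obj r} (f : Mor Ω Ω') : oImage f Ω = Ω' := by
  funext i
  ext b
  refine ⟨fun hb => ?_, fun hb => ?_⟩
  · obtain ⟨a, ha, rfl⟩ := Finset.mem_image.mp hb
    exact apMor_mem f ha
  · refine Finset.mem_image.mpr ⟨(f i).symm ⟨b, hb⟩, ((f i).symm ⟨b, hb⟩).2, ?_⟩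
    simp [apMor]

lemma oImage_oEmpty {Ω Ω' : Obj r} (f : Mor Ω Ω') : oImage f (oEmpty r) = oEmpty r := by
  funext i
  simp [oImage, oEmpty]

lemma oImage_ne_oEmpty {Ω Ω' : Obj r} (f : Mor Ω Ω') {O : Obj r} (hO : O ≠ oEmpty r) :
    oImage f O ≠ oEmpty r :=
  fun h => hO (funext fun i => Finset.image_eq_empty.mp (congrFun h i))

lemma oImage_union {Ω Ω' : Obj r} (f : Mor Ω Ω') (A B : Obj r) :
    oImage f (oUnion A B) = oUnion (oImage f A) (oImage f B) :=
  funext fun _ => Finset.image_union _ _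

lemma oSub_oImage {Ω Ω' : Obj r} (f : Mor Ω Ω') {O : Obj r} (hO : oSub O Ω) :
    oSub (oImage f O) Ω' := by
  intro i b hb
  obtain ⟨a, ha, rfl⟩ := Finset.mem_image.mp hb
  exact apMor_mem f (hO i ha)

lemma oDisj_oImage {Ω Ω' : Obj r} (f : Mor Ω Ω') {A B : Obj r}
    (hA : oSub A Ω) (hB : oSub B Ω) (h : oDisj A B) :
    oDisj (oImage f A) (oImage f B) := by
  intro i
  simp only [oImage, Finset.disjoint_left, Finset.mem_image]
  rintro _ ⟨a, ha, rfl⟩ ⟨b, hb, hba⟩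
  obtain rfl := apMor_injOn f i (hB i hb) (hA i ha) hba
  exact Finset.disjoint_left.mp (h i) ha hb

lemma oImage_oDiff {Ω Ω' : Obj r} (f : Mor Ω Ω') {A : Obj r} (hA : oSub A Ω) :
    oImage f (oDiff Ω A) = oDiff Ω' (oImage f A) := by
  funext i
  have hΩ' := congrFun (oImage_self f) i
  simp only [oImage, oDiff] at hΩ' ⊢
  rw [Finset.image_sdiff_of_injOn (apMor_injOn f i) (hA i), hΩ']

lemma oUnion_oDiff_of_oSub {Ω₁ Ω : Obj r} (h : oSub Ω₁ Ω) : oUnion Ω₁ (oDiff Ω Ω₁) = Ω :=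
  funext fun i => Finset.union_sdiff_of_subset (h i)

lemma oDisj_oDiff (Ω₁ Ω : Obj r) : oDisj Ω₁ (oDiff Ω Ω₁) := fun _ => Finset.disjoint_sdiff

lemma oSub_oUnion_left (A B : Obj r) : oSub A (oUnion A B) := fun _ => Finset.subset_union_left

lemma oSub_oUnion_right (A B : Obj r) : oSub B (oUnion A B) := fun _ => Finset.subset_union_right

/-- `f` is the disjoint union of its restrictions to `Ω₁` and `Ω₂`, so this is the naturality
of `η`. -/
lemma CompOp.map_η {F : Species r} (E : CompOp F) {Ω Ω' Ω₁ Ω₂ : Obj r} (f : Mor Ω Ω')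
    (h12 : oDisj Ω₁ Ω₂) (hU : oUnion Ω₁ Ω₂ = Ω) (h1 : oSub Ω₁ Ω) (h2 : oSub Ω₂ Ω)
    {x y : ℕ} (hx : x ∈ F.obj Ω₁) (hy : y ∈ F.obj Ω₂) :
    F.map f (E.η Ω₁ Ω₂ (x, y)) =
      E.η (oImage f Ω₁) (oImage f Ω₂) (F.map (restrictMor f h1) x, F.map (restrictMor f h2) y) := by
  have h12' := oDisj_oImage f h1 h2 h12
  have hU' : oUnion (oImage f Ω₁) (oImage f Ω₂) = Ω' := by
    rw [← oImage_union, hU, oImage_self]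
  rw [← E.natural h12 h12' _ _ x hx y hy]
  refine congrFun (F.map_congr _ _ hU.symm hU'.symm fun i a ha => ?_) _
  rw [← hU] at ha
  rcases Finset.mem_union.mp ha with ha | ha
  · rw [apMor_morUnion_of_mem_left _ _ _ _ ha, apMor_restrictMor _ _ ha]
  · rw [apMor_morUnion_of_mem_right _ _ _ _ ha, apMor_restrictMor _ _ ha]

lemma indec_subset_obj (F : Species r) (E : CompOp F) (Ω : Obj r) :
    indec F E Ω ⊆ F.obj Ω := by
  rw [indec]
  split_ifs
  exacts [Set.empty_subset _, Set.sdiff_subset]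

lemma indecK_subset_obj (F : Species r) (E : CompOp F) (k : ℕ) (Ω : Obj r) :
    indecK F E k Ω ⊆ F.obj Ω := by
  induction k generalizing Ω with
  | zero =>
    simp only [indecK]
    split_ifs with hΩ
    exacts [hΩ ▸ subset_rfl, Set.empty_subset _]
  | succ k ih =>
    simp only [indecK, Set.iUnion_subset_iff]
    rintro Ω₁ hsub _ ⟨⟨a, b⟩, ⟨ha, hb⟩, rfl⟩
    have := E.mem_η (oDisj_oDiff Ω₁ Ω) a (indec_subset_obj F E Ω₁ ha) b (ih _ hb)
    rwa [oUnion_oDiff_of_oSub hsub] at this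

def IsDecomposable (F : Species r) (E : CompOp F) (Ω : Obj r) (z : ℕ) : Prop :=
  ∃ Ω₁ Ω₂ : Obj r, oDisj Ω₁ Ω₂ ∧ Ω₁ ≠ oEmpty r ∧ Ω₂ ≠ oEmpty r ∧ oUnion Ω₁ Ω₂ = Ω ∧
    z ∈ E.η Ω₁ Ω₂ '' ((F.obj Ω₁ : Set ℕ) ×ˢ (F.obj Ω₂ : Set ℕ))

lemma mem_indec_iff {F : Species r} {E : CompOp F} {Ω : Obj r} {x : ℕ} :
    x ∈ indec F E Ω ↔ Ω ≠ oEmpty r ∧ x ∈ F.obj Ω ∧ ¬ IsDecomposable F E Ω x := by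
  rw [indec]
  split_ifs with hΩ
  · simp [hΩ]
  · simp only [hΩ, Set.mem_sdiff, Set.mem_iUnion, Prod.exists, exists_prop, IsDecomposable,
      ne_eq, not_false_eq_true, true_and, Finset.mem_coe]

lemma IsDecomposable.map {F : Species r} {E : CompOp F} {Ω Ω' : Obj r} (f : Mor Ω Ω')
    {z : ℕ} (hz : IsDecomposable F E Ω z) : IsDecomposable F E Ω' (F.map f z) := by
  obtain ⟨Ω₁, Ω₂, h12, hne1, hne2, hU, ⟨a, b⟩, ⟨ha, hb⟩, rfl⟩ := hz
  have h1 : oSub Ω₁ Ω := hU ▸ oSub_oUnion_left Ω₁ Ω₂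
  have h2 : oSub Ω₂ Ω := hU ▸ oSub_oUnion_right Ω₁ Ω₂
  refine ⟨oImage f Ω₁, oImage f Ω₂, oDisj_oImage f h1 h2 h12, oImage_ne_oEmpty f hne1,
    oImage_ne_oEmpty f hne2, by rw [← oImage_union, hU, oImage_self], ?_⟩
  rw [E.map_η f h12 hU h1 h2 ha hb]
  exact Set.mem_image_of_mem _ ⟨F.map_mem _ a ha, F.map_mem _ b hb⟩

lemma image_indec_subset (F : Species r) (E : CompOp F) {Ω Ω' : Obj r} (f : Mor Ω Ω') :
    F.map f '' indec F E Ω ⊆ indec F E Ω' := by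
  rintro _ ⟨x, hx, rfl⟩
  obtain ⟨hΩ, hxF, hx⟩ := mem_indec_iff.mp hx
  refine mem_indec_iff.mpr ⟨oImage_self f ▸ oImage_ne_oEmpty f hΩ, F.map_mem f x hxF, ?_⟩
  intro hdec
  exact hx (F.map_symm_map f hxF ▸ hdec.map f.symm)

lemma image_indecK_subset (F : Species r) (E : CompOp F) (k : ℕ) {Ω Ω' : Obj r}
    (f : Mor Ω Ω') : F.map f '' indecK F E k Ω ⊆ indecK F E k Ω' := by
  induction k generalizing Ω Ω' with
  | zero =>
    rintro _ ⟨x, hx, rfl⟩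
    simp only [indecK] at hx ⊢
    split_ifs at hx with hΩ
    · subst hΩ
      have hΩ' : Ω' = oEmpty r := (oImage_self f).symm.trans (oImage_oEmpty f)
      subst hΩ'
      simpa using F.map_mem f x hx
    · exact absurd hx (Set.notMem_empty x)
  | succ k ih =>
    rintro _ ⟨x, hx, rfl⟩
    simp only [indecK, Set.mem_iUnion] at hx ⊢
    obtain ⟨Ω₁, hsub, ⟨a, b⟩, ⟨ha, hb⟩, rfl⟩ := hx
    have h2 : oSub (oDiff Ω Ω₁) Ω := fun _ => Finset.sdiff_subset
    refine ⟨oImage f Ω₁, oSub_oImage f hsub, ?_⟩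
    rw [← oImage_oDiff f hsub, E.map_η f (oDisj_oDiff Ω₁ Ω) (oUnion_oDiff_of_oSub hsub) hsub h2
      (indec_subset_obj F E Ω₁ ha) (indecK_subset_obj F E k _ hb)]
    exact Set.mem_image_of_mem _ ⟨image_indec_subset F E _ ⟨a, ha, rfl⟩, ih _ ⟨b, hb, rfl⟩⟩

theorem stmt11_general {r : ℕ} (F : Species r) (E : CompOp F)
    (Ω Ω' : Obj r) (f : Mor Ω Ω') (k : ℕ) :
    F.map f '' indecK F E k Ω = indecK F E k Ω' :=
  F.image_eq_of_image_subset (indecK_subset_obj F E k) (image_indecK_subset F E k) f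

/-- Functoriality of `F_Η^(k)`: for every morphism `f : Ω → Ω̃` of `Set^r` and
every `k ≥ 0`, `F[f](F_Η^(k)[Ω]) = F_Η^(k)[Ω̃]`; hence each `F_Η^(k)` is a
functor `Set^r → Set`, i.e. an `r`-sort species. -/
theorem stmt11 {r : ℕ} (hr : 0 < r) (F : Species r) (E : CompOp F)
    (hF : ∃ Ω : Obj r, (F.obj Ω).Nonempty)
    (Ω Ω' : Obj r) (f : Mor Ω Ω') (k : ℕ) :
    F.map f '' indecK F E k Ω = indecK F E k Ω' :=
  stmt11_general F E Ω Ω' f k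

end
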